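/- With the hypotheses of the classification theorem (p^m ≡ 3 mod 4, α a non-square, β ≠ 0), the ideal C = ⟨(x²+γx+γ²/2)^i (x²-γx+γ²/2)^j⟩ of 𝓡 = R[x]/⟨x^{4p^s}-(α+βu)⟩ has cardinality p^{m(8p^s - 2i - 2j)}, for 0 ≤ i, j ≤ 2p^s. -/

import Mathlib

open Polynomial

/-- The chain ring `R = F_{p^m}[u]/⟨u²⟩`. -/
abbrev Ru (K : Type) [Field K] : Type := K[X] ⧸ Ideal.span {(X : K[X]) ^ 2}

noncomputable instance (K : Type) [Field K] : CommRing (Ru K) := Ideal.Quotient.commRing _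

/-- The element `u` of `R`. -/
noncomputable def uR (K : Type) [Field K] : Ru K :=
  Ideal.Quotient.mk _ (X : K[X])

/-- The natural inclusion of `F_{p^m}` into `R`. -/
noncomputable def tR (K : Type) [Field K] (a : K) : Ru K :=
  Ideal.Quotient.mk _ (C a : K[X])

/-- The ambient ring `R[x]/⟨xⁿ - λ⟩` of `λ`-constacyclic codes of length `n` over `R`. -/
abbrev RC (K : Type) [Field K] (lam : Ru K) (n : ℕ) : Type :=
  (Ru K)[X] ⧸ Ideal.span {(X : (Ru K)[X]) ^ n - C lam}

/-- The canonical projection `R[x] → R[x]/⟨xⁿ - λ⟩`. -/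
noncomputable def mkC (K : Type) [Field K] (lam : Ru K) (n : ℕ) :
    (Ru K)[X] →+* RC K lam n :=
  Ideal.Quotient.mk _

/-- The quadratic `x² + γx + γ²/2`, viewed over `R`. -/
noncomputable def qR (K : Type) [Field K] (g : K) : (Ru K)[X] :=
  X ^ 2 + C (tR K g) * X + C (tR K (g ^ 2 / 2))

/-!
Sending `u` to `β⁻¹ (xⁿ - α)` defines a surjective ring map from `R[x]/⟨xⁿ - (α + βu)⟩` onto
`F[x]/⟨(xⁿ - α)²⟩`, and both sides have `|F|^(2n)` elements, so it is an isomorphism. For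
`n = 4pˢ` and characteristic `p`, `xⁿ - α = (x⁴ - α₀)^(pˢ)`, and `γ⁴ = -4α₀` splits `x⁴ - α₀` into
the two quadratics `x² ± γx + γ²/2`. The generator `f` thus divides the modulus `f g` with `g` of
degree `8pˢ - 2i - 2j`, and the ideal `⟨f⟩` of `F[x]/⟨f g⟩` is isomorphic to `F[x]/⟨g⟩` as an
`F[x]`-module.
-/

namespace Polynomial

variable {R : Type*} [CommRing R] {f : R[X]}

theorem finite_quotient_span_monic [Finite R] (hf : f.Monic) : Finite (R[X] ⧸ Ideal.span {f}) :=
  Finite.of_equiv _ (AdjoinRoot.powerBasis' hf).basis.equivFun.toEquiv.symm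

theorem natCard_quotient_span_monic (hf : f.Monic) :
    Nat.card (R[X] ⧸ Ideal.span {f}) = Nat.card R ^ f.natDegree := by
  change Nat.card (AdjoinRoot f) = _
  rw [Nat.card_congr (AdjoinRoot.powerBasis' hf).basis.equivFun.toEquiv, Nat.card_fun,
    Nat.card_eq_fintype_card (α := Fin _), Fintype.card_fin]
  rfl

end Polynomial

theorem natCard_span_singleton_ringEquiv {A B : Type*} [CommRing A] [CommRing B] (e : A ≃+* B)
    (a : A) : Nat.card (Ideal.span {e a}) = Nat.card (Ideal.span {a}) :=
  Nat.card_congr <| (e.toEquiv.subtypeEquiv fun x => by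
    simp [Ideal.mem_span_singleton, map_dvd_iff]).symm

theorem natCard_span_mk_of_mul {R : Type*} [CommRing R] [IsDomain R] [Finite R] {f g M : R[X]}
    (hf : f ≠ 0) (hg : g.Monic) (hM : f * g = M) :
    Nat.card (Ideal.span {Ideal.Quotient.mk (Ideal.span {M}) f}) = Nat.card R ^ g.natDegree := by
  subst hM
  set I := Ideal.span {f * g}
  let φ := LinearMap.toSpanSingleton R[X] (Ideal.span {Ideal.Quotient.mk I f})
    ⟨_, Ideal.mem_span_singleton_self _⟩
  have hsurj : Function.Surjective φ := by
    rintro ⟨y, hy⟩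
    obtain ⟨c, rfl⟩ := Ideal.mem_span_singleton'.mp hy
    obtain ⟨x, rfl⟩ := Ideal.Quotient.mk_surjective c
    exact ⟨x, rfl⟩
  have hker : LinearMap.ker φ = Ideal.span {g} := by
    ext x
    simp only [LinearMap.mem_ker, LinearMap.toSpanSingleton_apply, φ, ← Subtype.coe_inj]
    change Ideal.Quotient.mk I x * Ideal.Quotient.mk I f = 0 ↔ _
    rw [← map_mul, Ideal.Quotient.eq_zero_iff_mem, Ideal.mem_span_singleton,
      Ideal.mem_span_singleton, mul_comm x, mul_dvd_mul_iff_left hf]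
  rw [← natCard_quotient_span_monic hg, ← hker]
  exact Nat.card_congr (φ.quotKerEquivOfSurjective hsurj).toEquiv.symm

section ChainRing

variable {K : Type} [Field K]

variable (K) in
noncomputable def tRingHom : K →+* Ru K := (Ideal.Quotient.mk _).comp C

theorem tRingHom_apply (a : K) : tRingHom K a = tR K a := rfl

variable (α β : K) (n : ℕ)

noncomputable def ruToQuotSq : Ru K →+* K[X] ⧸ Ideal.span {(X ^ n - C α) ^ 2} :=
  AdjoinRoot.lift ((Ideal.Quotient.mk _).comp C) (Ideal.Quotient.mk _ (C β⁻¹ * (X ^ n - C α))) (by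
    rw [eval₂_X_pow, ← map_pow, Ideal.Quotient.eq_zero_iff_mem, mul_pow]
    exact Ideal.mul_mem_left _ _ (Ideal.mem_span_singleton_self _))

theorem ruToQuotSq_tR (a : K) : ruToQuotSq α β n (tR K a) = Ideal.Quotient.mk _ (C a) :=
  AdjoinRoot.lift_of _

theorem ruToQuotSq_uR :
    ruToQuotSq α β n (uR K) = Ideal.Quotient.mk _ (C β⁻¹ * (X ^ n - C α)) :=
  AdjoinRoot.lift_root _

variable {β} in
noncomputable def rcToQuotSq (hβ : β ≠ 0) :
    RC K (tR K α + tR K β * uR K) n →+* K[X] ⧸ Ideal.span {(X ^ n - C α) ^ 2} :=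
  AdjoinRoot.lift (ruToQuotSq α β n) (Ideal.Quotient.mk _ X) (by
    rw [eval₂_sub, eval₂_X_pow, eval₂_C, map_add, map_mul, ruToQuotSq_tR, ruToQuotSq_tR,
      ruToQuotSq_uR, ← map_pow, ← map_mul, ← map_add, ← map_sub, ← mul_assoc, ← C_mul,
      mul_inv_cancel₀ hβ, C_1, one_mul, add_sub_cancel, sub_self, map_zero])

variable {β} (hβ : β ≠ 0)

theorem rcToQuotSq_mkC_map (f : K[X]) :
    rcToQuotSq α n hβ (mkC K _ n (f.map (tRingHom K))) = Ideal.Quotient.mk _ f := by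
  suffices (rcToQuotSq α n hβ).comp ((mkC K _ n).comp (mapRingHom (tRingHom K))) =
      Ideal.Quotient.mk _ from DFunLike.congr_fun this f
  refine ringHom_ext (fun a => ?_) ?_
  · simp only [RingHom.comp_apply, coe_mapRingHom, Polynomial.map_C]
    exact (AdjoinRoot.lift_of _).trans (ruToQuotSq_tR α β n a)
  · simp only [RingHom.comp_apply, coe_mapRingHom, Polynomial.map_X]
    exact AdjoinRoot.lift_root _

theorem rcToQuotSq_bijective [Finite K] (hn : n ≠ 0) :
    Function.Bijective (rcToQuotSq α n hβ) := by
  have : Finite (Ru K) := finite_quotient_span_monic (monic_X_pow 2)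
  have : Finite (RC K (tR K α + tR K β * uR K) n) :=
    finite_quotient_span_monic (monic_X_pow_sub_C _ hn)
  refine (Nat.bijective_iff_surjective_and_card _).mpr ⟨fun y => ?_, ?_⟩
  · obtain ⟨f, rfl⟩ := Ideal.Quotient.mk_surjective y
    exact ⟨_, rcToQuotSq_mkC_map α n hβ f⟩
  · have : Nontrivial (Ru K) := AdjoinRoot.nontrivial _ (by simp)
    rw [natCard_quotient_span_monic (monic_X_pow_sub_C _ hn),
      natCard_quotient_span_monic ((monic_X_pow_sub_C _ hn).pow 2),
      natCard_quotient_span_monic (monic_X_pow 2)]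
    simp only [natDegree_X_pow_sub_C, natDegree_pow, natDegree_X, ← pow_mul, one_mul, mul_comm]

end ChainRing

section Quadratic

variable {K : Type} [Field K]

noncomputable def quadK (g : K) : K[X] := X ^ 2 + C g * X + C (g ^ 2 / 2)

theorem qR_eq_map (g : K) : qR K g = (quadK g).map (tRingHom K) := by
  simp only [qR, quadK, Polynomial.map_add, Polynomial.map_pow, Polynomial.map_mul,
    Polynomial.map_X, Polynomial.map_C, tRingHom_apply]

theorem monic_quadK (g : K) : (quadK g).Monic := by
  unfold quadK; monicity!

theorem natDegree_quadK (g : K) : (quadK g).natDegree = 2 := by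
  unfold quadK; compute_degree!

theorem monic_quadK_pow_mul (g h : K) (a b : ℕ) : (quadK g ^ a * quadK h ^ b).Monic :=
  ((monic_quadK g).pow a).mul ((monic_quadK h).pow b)

theorem natDegree_quadK_pow_mul (g h : K) (a b : ℕ) :
    (quadK g ^ a * quadK h ^ b).natDegree = 2 * a + 2 * b := by
  rw [((monic_quadK g).pow a).natDegree_mul ((monic_quadK h).pow b), (monic_quadK g).natDegree_pow,
    (monic_quadK h).natDegree_pow, natDegree_quadK, natDegree_quadK, mul_comm a, mul_comm b]

theorem quadK_mul_quadK_neg (h2 : (2 : K) ≠ 0) (g : K) :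
    quadK g * quadK (-g) = X ^ 4 + C (g ^ 4 / 4) := by
  have hsq : (C g : K[X]) ^ 2 = 2 * C (g ^ 2 / 2) := by
    rw [← C_pow, ← map_ofNat C 2, ← C_mul, mul_div_cancel₀ _ h2]
  have hquart : (C (g ^ 4 / 4) : K[X]) = C (g ^ 2 / 2) ^ 2 := by
    rw [← C_pow, div_pow, ← pow_mul]
    norm_num
  rw [quadK, quadK, C_neg, neg_sq, hquart]
  linear_combination (-X ^ 2 : K[X]) * hsq

theorem quadK_mul_quadK_neg_pow {p : ℕ} [Fact p.Prime] [CharP K p] (h2 : (2 : K) ≠ 0)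
    {α α₀ γ : K} (s : ℕ) (hα₀ : α₀ ^ p ^ s = α) (hγ : γ ^ 4 = -4 * α₀) :
    (quadK γ * quadK (-γ)) ^ (2 * p ^ s) = (X ^ (4 * p ^ s) - C α) ^ 2 := by
  have h4 : (4 : K) ≠ 0 := (show (4 : K) = 2 * 2 by norm_num) ▸ mul_ne_zero h2 h2
  rw [quadK_mul_quadK_neg h2, hγ, neg_mul, neg_div, mul_div_cancel_left₀ _ h4, C_neg,
    ← sub_eq_add_neg, mul_comm 2, pow_mul, sub_pow_char_pow, ← pow_mul, ← C_pow, hα₀]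

end Quadratic

theorem stmt13 (p s m : ℕ) (hp : p.Prime) (hodd : Odd p)
    (K : Type) [Field K] [Fintype K] (hK : Fintype.card K = p ^ m)
    (α β : K) (hβ : β ≠ 0)
    (α₀ : K) (hα₀ : α₀ ^ p ^ s = α) (γ : K) (hγ : γ ^ 4 = -4 * α₀) :
    ∀ i j : ℕ, i ≤ 2 * p ^ s → j ≤ 2 * p ^ s →
      Nat.card (Ideal.span {mkC K (tR K α + tR K β * uR K) (4 * p ^ s)
          (qR K γ ^ i * qR K (-γ) ^ j)} :
        Ideal (RC K (tR K α + tR K β * uR K) (4 * p ^ s))) =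
      p ^ (m * (8 * p ^ s - 2 * i - 2 * j)) := by
  intro i j hi hj
  have : Fact p.Prime := ⟨hp⟩
  have : CharP K p := charP_of_card_eq_prime_pow hK
  have h2 : (2 : K) ≠ 0 := Ring.two_ne_zero <| by
    rw [ringChar.eq K p]; rintro rfl; exact absurd hodd (by decide)
  let E := RingEquiv.ofBijective _ (rcToQuotSq_bijective α (4 * p ^ s) hβ (by simp [hp.ne_zero]))
  have hE : E (mkC K _ _ (qR K γ ^ i * qR K (-γ) ^ j)) =
      Ideal.Quotient.mk _ (quadK γ ^ i * quadK (-γ) ^ j) := by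
    rw [qR_eq_map, qR_eq_map, ← Polynomial.map_pow, ← Polynomial.map_pow, ← Polynomial.map_mul]
    exact rcToQuotSq_mkC_map α _ hβ _
  have hsplit : (quadK γ ^ i * quadK (-γ) ^ j) *
      (quadK γ ^ (2 * p ^ s - i) * quadK (-γ) ^ (2 * p ^ s - j)) = (X ^ (4 * p ^ s) - C α) ^ 2 := by
    rw [← quadK_mul_quadK_neg_pow h2 s hα₀ hγ, mul_pow, mul_mul_mul_comm, ← pow_add, ← pow_add,
      Nat.add_sub_cancel' hi, Nat.add_sub_cancel' hj]
  rw [← natCard_span_singleton_ringEquiv E, hE, natCard_span_mk_of_mul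
    (monic_quadK_pow_mul γ (-γ) i j).ne_zero (monic_quadK_pow_mul γ (-γ) _ _) hsplit,
    natDegree_quadK_pow_mul, Nat.card_eq_fintype_card, hK, ← pow_mul]
  congr 2
  omega
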